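/- Let P be a transition function on a layered episodic MDP, let π₁ be a stochastic policy and let π₂ : S → A be a deterministic policy (i.e. the stochastic policy placing all mass on action π₂(s) in state s). Then Σ_{s ≠ s_L} Σ_{a ∈ A} |q^{P,π₁}(s,a) − q^{P,π₂}(s,a)| ≤ 2L·Σ_{s ≠ s_L} Σ_{a ≠ π₂(s)} q^{P,π₁}(s,a). -/

import Mathlib

open Finset

/-- A layered episodic MDP: a finite state space partitioned into layers
`0, 1, …, L` (`L ≥ 1`) via the map `layer`, where layer `0` contains only the
initial state `s0` and layer `L` contains only the terminal state `sL`,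
together with a finite action set. -/
structure LayeredMDP where
  State : Type
  Action : Type
  fintState : Fintype State
  decEqState : DecidableEq State
  fintAction : Fintype Action
  L : ℕ
  one_le_L : 1 ≤ L
  layer : State → ℕ
  layer_le : ∀ s, layer s ≤ L
  s0 : State
  sL : State
  layer_s0 : layer s0 = 0
  layer_sL : layer sL = L
  eq_s0_of_layer : ∀ s, layer s = 0 → s = s0
  eq_sL_of_layer : ∀ s, layer s = L → s = sL

attribute [instance] LayeredMDP.fintState LayeredMDP.decEqState LayeredMDP.fintAction

namespace LayeredMDP

variable (M : LayeredMDP)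

/-- A substochastic transition: nonnegative weights, supported on the next
layer, summing to at most `1` at every non-terminal state-action pair (the
missing mass is interpreted as moving directly to the terminal state). -/
def IsSubTransition (P : M.State → M.Action → M.State → ℝ) : Prop :=
  (∀ s a s', 0 ≤ P s a s') ∧
  (∀ s a s', P s a s' ≠ 0 → M.layer s' = M.layer s + 1) ∧
  (∀ s a, M.layer s < M.L → ∑ s', P s a s' ≤ 1)

/-- A (fully stochastic) transition function: for each non-terminal `(s,a)`,
a probability distribution on the next layer. -/
def IsTransition (P : M.State → M.Action → M.State → ℝ) : Prop :=
  (∀ s a s', 0 ≤ P s a s') ∧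
  (∀ s a s', P s a s' ≠ 0 → M.layer s' = M.layer s + 1) ∧
  (∀ s a, M.layer s < M.L → ∑ s', P s a s' = 1)

/-- A stochastic policy: a probability distribution over actions at each state. -/
def IsPolicy (π : M.State → M.Action → ℝ) : Prop :=
  (∀ s a, 0 ≤ π s a) ∧ (∀ s, ∑ a, π s a = 1)

/-- `occAuxFrom P π u n s` : probability of being at state `s` after `n` steps
when starting from state `u`, following policy `π` under transition `P`. -/
def occAuxFrom (P : M.State → M.Action → M.State → ℝ) (π : M.State → M.Action → ℝ)
    (u : M.State) : ℕ → M.State → ℝ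
  | 0 => fun s => if s = u then 1 else 0
  | n + 1 => fun s => ∑ s', ∑ a', occAuxFrom P π u n s' * π s' a' * P s' a' s

/-- Occupancy measure started at `u`: `occFrom P π u s a` is the probability of
visiting `(s,a)` when starting from `u` and executing `π` under transition `P`. -/
def occFrom (P : M.State → M.Action → M.State → ℝ) (π : M.State → M.Action → ℝ)
    (u : M.State) (s : M.State) (a : M.Action) : ℝ :=
  (if M.layer u ≤ M.layer s then M.occAuxFrom P π u (M.layer s - M.layer u) s else 0) * π s a

/-- Occupancy measure `q^{P,π}(s,a)` (started at the initial state `s0`). -/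
def occ (P : M.State → M.Action → M.State → ℝ) (π : M.State → M.Action → ℝ)
    (s : M.State) (a : M.Action) : ℝ :=
  M.occFrom P π M.s0 s a

/-- State occupancy measure `q^{P,π}(s) = Σ_a q^{P,π}(s,a)`. -/
def occState (P : M.State → M.Action → M.State → ℝ) (π : M.State → M.Action → ℝ)
    (s : M.State) : ℝ :=
  ∑ a, M.occ P π s a

/-- Backward recursion for value functions: `valAux P π ℓ n s` is the value of
state `s` with `n` steps remaining. -/
def valAux (P : M.State → M.Action → M.State → ℝ) (π : M.State → M.Action → ℝ)
    (ℓ : M.State → M.Action → ℝ) : ℕ → M.State → ℝ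
  | 0 => fun _ => 0
  | n + 1 => fun s => ∑ a, π s a * (ℓ s a + ∑ s', P s a s' * valAux P π ℓ n s')

/-- State value function `V^{P,π}(s;ℓ)`. -/
def V (P : M.State → M.Action → M.State → ℝ) (π : M.State → M.Action → ℝ)
    (ℓ : M.State → M.Action → ℝ) (s : M.State) : ℝ :=
  M.valAux P π ℓ (M.L - M.layer s) s

/-- State-action value function `Q^{P,π}(s,a;ℓ)` (equal to `0` at the terminal layer). -/
def Q (P : M.State → M.Action → M.State → ℝ) (π : M.State → M.Action → ℝ)
    (ℓ : M.State → M.Action → ℝ) (s : M.State) (a : M.Action) : ℝ :=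
  if M.layer s < M.L then ℓ s a + ∑ s', P s a s' * M.V P π ℓ s' else 0

end LayeredMDP

/-! Let `d¹ₙ`, `d²ₙ` be the state distributions after `n` steps under `π₁` and under `π₂`. At a
single state the state-action occupancies differ by at most `|d¹ₙ(s) - d²ₙ(s)|` plus twice the
mass `π₁` puts off `π₂(s)`, and one step of a substochastic transition does not increase the
`ℓ¹` distance. So the distance at layer `n` is at most twice the disagreement mass of layers
`0, …, n`, hence at most twice the total disagreement mass; summing over the `L` non-terminal
layers gives `2L`. -/

theorem sum_abs_mul_sub_mul_ite_le {A : Type*} [Fintype A] [DecidableEq A]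
    {p : A → ℝ} (hp0 : ∀ a, 0 ≤ p a) (hp1 : ∑ a, p a = 1) (c : A) {x : ℝ} (hx : 0 ≤ x)
    (y : ℝ) :
    ∑ a, |x * p a - y * (if a = c then 1 else 0)| ≤
      2 * ∑ a ∈ univ.filter (· ≠ c), x * p a + |x - y| := by
  have hrest : ∑ a ∈ univ.erase c, x * p a = x - x * p c := by
    rw [← mul_sum]
    linear_combination x * (sum_erase_add univ p (mem_univ c)).trans hp1
  have hpc : p c ≤ 1 := hp1 ▸ single_le_sum (fun a _ => hp0 a) (mem_univ c)
  have hc : |x * p c - y| ≤ (x - x * p c) + |x - y| := by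
    calc |x * p c - y| ≤ |x * p c - x| + |x - y| := abs_sub_le _ _ _
      _ = (x - x * p c) + |x - y| := by
        rw [abs_of_nonpos (by nlinarith)]
        ring
  rw [filter_ne', ← add_sum_erase _ _ (mem_univ c), if_pos rfl, mul_one]
  rw [sum_congr rfl fun a ha => by
    rw [if_neg (ne_of_mem_erase ha), mul_zero, sub_zero, abs_of_nonneg (mul_nonneg hx (hp0 a))]]
  linarith

namespace LayeredMDP

variable (M : LayeredMDP)

def detPolicy [DecidableEq M.Action] (π : M.State → M.Action) : M.State → M.Action → ℝ :=
  fun s a => if a = π s then 1 else 0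

def occStep (P : M.State → M.Action → M.State → ℝ) (π : M.State → M.Action → ℝ)
    (u : M.State) (n : ℕ) (s : M.State) (a : M.Action) : ℝ :=
  M.occAuxFrom P π u n s * π s a

variable {M}

theorem layer_lt_L_iff (s : M.State) : M.layer s < M.L ↔ s ≠ M.sL := by
  refine ⟨fun h hs => ?_, fun h => (M.layer_le s).lt_of_ne fun hL => h (M.eq_sL_of_layer s hL)⟩
  rw [hs, M.layer_sL] at h
  exact lt_irrefl _ h

theorem IsTransition.isSubTransition {P : M.State → M.Action → M.State → ℝ}
    (hP : M.IsTransition P) : M.IsSubTransition P :=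
  ⟨hP.1, hP.2.1, fun s a hs => (hP.2.2 s a hs).le⟩

/-- At the terminal state `P` vanishes, since it is supported on a layer beyond `L`. -/
theorem IsSubTransition.sum_le_one {P : M.State → M.Action → M.State → ℝ}
    (hP : M.IsSubTransition P) (s : M.State) (a : M.Action) : ∑ s', P s a s' ≤ 1 := by
  rcases (M.layer_le s).lt_or_eq with hs | hs
  · exact hP.2.2 s a hs
  · rw [sum_eq_zero fun s' _ => by_contra fun h => by
      have := hP.2.1 s a s' h
      have := M.layer_le s'
      omega]
    exact zero_le_one

theorem sum_abs_sum_sum_mul_le {P : M.State → M.Action → M.State → ℝ}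
    (hP : M.IsSubTransition P) (v : M.State → M.Action → ℝ) :
    ∑ s, |∑ s', ∑ a, v s' a * P s' a s| ≤ ∑ s', ∑ a, |v s' a| :=
  calc ∑ s, |∑ s', ∑ a, v s' a * P s' a s|
      ≤ ∑ s, ∑ s', ∑ a, |v s' a| * P s' a s := by
        gcongr with s _
        refine (abs_sum_le_sum_abs _ _).trans (sum_le_sum fun s' _ => ?_)
        refine (abs_sum_le_sum_abs _ _).trans_eq (sum_congr rfl fun a _ => ?_)
        rw [abs_mul, abs_of_nonneg (hP.1 s' a s)]
    _ = ∑ s', ∑ a, |v s' a| * ∑ s, P s' a s := by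
        rw [sum_comm]
        refine sum_congr rfl fun s' _ => ?_
        rw [sum_comm]
        simp only [mul_sum]
    _ ≤ ∑ s', ∑ a, |v s' a| := by
        gcongr with s' _ a _
        exact mul_le_of_le_one_right (abs_nonneg _) (hP.sum_le_one s' a)

theorem occAuxFrom_nonneg {P : M.State → M.Action → M.State → ℝ} (hP : ∀ s a s', 0 ≤ P s a s')
    {π : M.State → M.Action → ℝ} (hπ : ∀ s a, 0 ≤ π s a) (u : M.State) (n : ℕ) (s : M.State) :
    0 ≤ M.occAuxFrom P π u n s := by
  induction n generalizing s with
  | zero => unfold occAuxFrom; positivity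
  | succ n ih =>
    exact sum_nonneg fun s' _ => sum_nonneg fun a _ =>
      mul_nonneg (mul_nonneg (ih s') (hπ s' a)) (hP s' a s)

theorem occAuxFrom_eq_zero {P : M.State → M.Action → M.State → ℝ}
    (hP : ∀ s a s', P s a s' ≠ 0 → M.layer s' = M.layer s + 1) (π : M.State → M.Action → ℝ)
    (u : M.State) {n : ℕ} {s : M.State} (hs : M.layer s ≠ M.layer u + n) :
    M.occAuxFrom P π u n s = 0 := by
  induction n generalizing s with
  | zero => exact if_neg fun h => hs (by rw [h, add_zero])
  | succ n ih =>
    refine sum_eq_zero fun s' _ => sum_eq_zero fun a _ => ?_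
    by_cases hP0 : P s' a s = 0
    · rw [hP0, mul_zero]
    · rw [ih fun h => hs (by rw [hP s' a s hP0, h, add_assoc]), zero_mul, zero_mul]

theorem occ_eq_occStep (P : M.State → M.Action → M.State → ℝ) (π : M.State → M.Action → ℝ)
    (s : M.State) (a : M.Action) : M.occ P π s a = M.occStep P π M.s0 (M.layer s) s a := by
  simp [occ, occFrom, occStep, M.layer_s0]

theorem sum_abs_occAuxFrom_succ_sub_le {P : M.State → M.Action → M.State → ℝ}
    (hP : M.IsSubTransition P) (π π' : M.State → M.Action → ℝ) (u : M.State) (n : ℕ) :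
    ∑ s, |M.occAuxFrom P π u (n + 1) s - M.occAuxFrom P π' u (n + 1) s| ≤
      ∑ s, ∑ a, |M.occStep P π u n s a - M.occStep P π' u n s a| := by
  simpa only [occAuxFrom, occStep, ← sum_sub_distrib, ← sub_mul] using
    sum_abs_sum_sum_mul_le hP fun s a => M.occStep P π u n s a - M.occStep P π' u n s a

section Deterministic

variable [DecidableEq M.Action] {P : M.State → M.Action → M.State → ℝ}
  {π : M.State → M.Action → ℝ} (π₂ : M.State → M.Action) (u : M.State)

theorem sum_abs_occStep_sub_detPolicy_le (hP : ∀ s a s', 0 ≤ P s a s') (hπ : M.IsPolicy π)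
    (n : ℕ) :
    ∑ s, ∑ a, |M.occStep P π u n s a - M.occStep P (M.detPolicy π₂) u n s a| ≤
      2 * ∑ s, ∑ a ∈ univ.filter (· ≠ π₂ s), M.occStep P π u n s a +
        ∑ s, |M.occAuxFrom P π u n s - M.occAuxFrom P (M.detPolicy π₂) u n s| := by
  rw [mul_sum, ← sum_add_distrib]
  exact sum_le_sum fun s _ => sum_abs_mul_sub_mul_ite_le (hπ.1 s) (hπ.2 s) (π₂ s)
    (M.occAuxFrom_nonneg hP hπ.1 u n s) _

theorem sum_abs_occStep_sub_detPolicy_le_sum_range (hP : M.IsSubTransition P)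
    (hπ : M.IsPolicy π) (n : ℕ) :
    ∑ s, ∑ a, |M.occStep P π u n s a - M.occStep P (M.detPolicy π₂) u n s a| ≤
      2 * ∑ j ∈ range (n + 1), ∑ s, ∑ a ∈ univ.filter (· ≠ π₂ s), M.occStep P π u j s a := by
  induction n with
  | zero =>
    simpa [occAuxFrom] using sum_abs_occStep_sub_detPolicy_le π₂ u hP.1 hπ 0
  | succ n ih =>
    rw [sum_range_succ, mul_add]
    linarith [sum_abs_occStep_sub_detPolicy_le π₂ u hP.1 hπ (n + 1),
      sum_abs_occAuxFrom_succ_sub_le hP π (M.detPolicy π₂) u n]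

end Deterministic

theorem sum_range_L_eq_sum_ne_sL {f : ℕ → M.State → ℝ}
    (hf : ∀ n s, M.layer s ≠ n → f n s = 0) :
    ∑ n ∈ range M.L, ∑ s, f n s = ∑ s ∈ univ.filter (· ≠ M.sL), f (M.layer s) s := by
  rw [sum_comm, sum_filter]
  refine sum_congr rfl fun s _ => ?_
  simp only [← layer_lt_L_iff, ← mem_range]
  rw [← sum_ite_eq (range M.L) (M.layer s) fun n => f n s]
  refine sum_congr rfl fun n _ => ?_
  split_ifs with h
  · rfl
  · exact hf n s h

end LayeredMDP

open LayeredMDP in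
/-- **Occupancy difference against a deterministic policy (Corollary D.15).**
For a transition function `P`, a stochastic policy `π₁` and a deterministic
policy `π₂ : S → A` (viewed as the stochastic policy placing all mass on
`π₂ s`),
`Σ_{s ≠ s_L} Σ_a |q^{P,π₁}(s,a) − q^{P,π₂}(s,a)|
  ≤ 2L · Σ_{s ≠ s_L} Σ_{a ≠ π₂(s)} q^{P,π₁}(s,a)`. -/
theorem occupancy_diff_deterministic (M : LayeredMDP)
    [DecidableEq M.Action]
    (P : M.State → M.Action → M.State → ℝ) (hP : M.IsTransition P)
    (π₁ : M.State → M.Action → ℝ) (hπ₁ : M.IsPolicy π₁)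
    (π₂ : M.State → M.Action) :
    ∑ s ∈ Finset.univ.filter (fun s => s ≠ M.sL), ∑ a,
        |M.occ P π₁ s a -
          M.occ P (fun s a => if a = π₂ s then (1 : ℝ) else 0) s a|
      ≤ 2 * (M.L : ℝ) *
        ∑ s ∈ Finset.univ.filter (fun s => s ≠ M.sL),
          ∑ a ∈ Finset.univ.filter (fun a => a ≠ π₂ s),
            M.occ P π₁ s a := by
  have hvanish : ∀ π n s, M.layer s ≠ n → M.occAuxFrom P π M.s0 n s = 0 := fun π n s h =>
    occAuxFrom_eq_zero hP.2.1 π M.s0 (by rwa [M.layer_s0, zero_add])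
  set E : ℕ → ℝ := fun j =>
    ∑ s, ∑ a ∈ univ.filter (· ≠ π₂ s), M.occStep P π₁ M.s0 j s a
  calc _ = ∑ n ∈ range M.L, ∑ s, ∑ a,
          |M.occStep P π₁ M.s0 n s a - M.occStep P (M.detPolicy π₂) M.s0 n s a| := by
        rw [sum_range_L_eq_sum_ne_sL fun n s h => by simp [occStep, hvanish _ n s h]]
        simp only [occ_eq_occStep]
        rfl
    _ ≤ ∑ n ∈ range M.L, 2 * ∑ j ∈ range M.L, E j := by
        gcongr with n hn
        refine (sum_abs_occStep_sub_detPolicy_le_sum_range π₂ M.s0 hP.isSubTransition hπ₁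
          n).trans ?_
        gcongr
        · exact fun j _ _ => sum_nonneg fun s _ => sum_nonneg fun a _ =>
            mul_nonneg (occAuxFrom_nonneg hP.1 hπ₁.1 _ _ _) (hπ₁.1 s a)
        · exact mem_range.1 hn
    _ = _ := by
        rw [sum_const, card_range, nsmul_eq_mul, sum_range_L_eq_sum_ne_sL fun n s h =>
          sum_eq_zero fun a _ => by simp [occStep, hvanish _ n s h]]
        simp only [occ_eq_occStep]
        ring
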